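/- Let c ∈ (0,1) be a constant such that |𝑃_M| ≥ c·M/log M for every integer M ≥ 2, where 𝑃_M is the set of primes p with ⌈M/2⌉ < p ≤ M. Then for every dimension d ≥ 1 and every tolerance ε ∈ (0,1) there exists an integer M ≥ 2 such that the equal-weight (QMC) rule based on the composite Korobov point set T_{M,d}^comp uses N = Σ_{p∈𝑃_M} p^2 ≤ (8d/(c·ε) + 1)^3 function evaluations and satisfies |ĉ(0) − (1/N) Σ_{p∈𝑃_M} Σ_{n=0}^{p^2−1} f(x̃_n^{(p)})| ≤ ε for every f : ℝ^d → ℂ given by an absolutely convergent Fourier series f(x) = Σ_{k∈ℤ^d} ĉ(k)·exp(2πi k·x) with Σ_{k∈ℤ^d} |ĉ(k)|·max(1, log|k|_∞) ≤ 1. In particular, the information complexity N(ε,d) for multivariate integration in F_d grows at most polynomially in ε^{−1} and d, with both exponents equal to 3, so the problem is polynomially tractable. -/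

import Mathlib

/-!
For a prime `p > d` and a frequency `k` with some `k_j` prime to `p`, write `n = u + p v` in
the Korobov sum `∑_{n < p²} e(g_k(n) / p²)`, where `g_k(n) = ∑ k_j n^{j+1}`. Since
`g_k(u + p v) ≡ g_k(u) + p v g_k'(u) mod p²`, the sum over `v` is `p` or `0` according as
`p ∣ g_k'(u)` or not, so the Korobov sum is at most `(d - 1) p` in absolute value, `g_k' mod p`
being a nonzero polynomial of degree `< d`. The primes of `𝑃_M` dividing every `k_j` all exceed
`M / 2`, so there are at most `2 log |k|_∞ / log M` of them; against `|𝑃_M| ≥ c M / log M`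
their trivial contribution is small as well. Hence the composite rule integrates each
character `e_k` with error at most `8d / (cM) · max(1, log |k|_∞)`, and `M = ⌈8d / (cε)⌉`
gives error `≤ ε` with `N ≤ M³` points.
-/

/-- `𝑃_M`: the set of primes `p` with `⌈M/2⌉ < p ≤ M` (note `⌈M/2⌉ = (M+1)/2` in `ℕ`). -/
def primesInDyadic (M : ℕ) : Finset ℕ :=
  (Finset.range (M + 1)).filter fun p => Nat.Prime p ∧ (M + 1) / 2 < p

open Finset Polynomial Complex
open scoped Real

lemma geom_sum_eq_ite_of_pow_eq_one {K : Type*} [Field K] [DecidableEq K] {ζ : K} {n : ℕ}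
    (h : ζ ^ n = 1) : ∑ i ∈ range n, ζ ^ i = if ζ = 1 then (n : K) else 0 := by
  split_ifs with hζ
  · simp [hζ]
  · rw [geom_sum_eq hζ, h, sub_self, zero_div]

lemma sum_range_mul_eq_sum_sum {M : Type*} [AddCommMonoid M] (m n : ℕ) (F : ℕ → M) :
    ∑ i ∈ range (m * n), F i = ∑ b ∈ range n, ∑ a ∈ range m, F (b + n * a) := by
  rw [← Fin.sum_univ_eq_sum_range, ← finProdFinEquiv.sum_comp, Fintype.sum_prod_type,
    Finset.sum_comm, ← Fin.sum_univ_eq_sum_range]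
  refine Fintype.sum_congr _ _ fun b => ?_
  rw [← Fin.sum_univ_eq_sum_range (fun a => F (b + n * a))]
  simp only [finProdFinEquiv_apply_val]

namespace ZMod

lemma stdAddChar_natCast_mul_intCast (p : ℕ) [NeZero p] (a : ℤ) :
    stdAddChar ((p : ZMod (p ^ 2)) * (a : ZMod (p ^ 2))) = stdAddChar (a : ZMod p) := by
  rw [show (p : ZMod (p ^ 2)) * (a : ZMod (p ^ 2)) = ((p * a : ℤ) : ZMod (p ^ 2)) by push_cast; rfl,
    stdAddChar_coe, stdAddChar_coe]
  have hp : (p : ℂ) ≠ 0 := NeZero.ne _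
  congr 1
  push_cast
  field_simp

lemma stdAddChar_intCast_eq_one_iff {N : ℕ} [NeZero N] (a : ℤ) :
    stdAddChar (a : ZMod N) = 1 ↔ (a : ZMod N) = 0 := by
  rw [← (stdAddChar (N := N)).map_zero_eq_one, injective_stdAddChar.eq_iff]

lemma norm_stdAddChar {N : ℕ} [NeZero N] (x : ZMod N) : ‖stdAddChar x‖ = 1 :=
  Circle.norm_coe _

end ZMod

lemma intCast_eval_add_natCast_mul (p : ℕ) (g : ℤ[X]) (u v : ℤ) :
    ((g.eval (u + p * v) : ℤ) : ZMod (p ^ 2))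
      = ((g.eval u : ℤ) : ZMod (p ^ 2))
        + (p : ZMod (p ^ 2)) * ((v * (derivative g).eval u : ℤ) : ZMod (p ^ 2)) := by
  have hsq : ((p : ZMod (p ^ 2)) * v) ^ 2 = 0 := by
    rw [mul_pow, ← Nat.cast_pow, ZMod.natCast_self, zero_mul]
  have hcast (f : ℤ[X]) (x : ℤ) :
      ((f.eval x : ℤ) : ZMod (p ^ 2)) = (f.map (Int.castRingHom _)).eval (x : ZMod (p ^ 2)) := by
    rw [eval_map]; exact (eval₂_hom (Int.castRingHom (ZMod (p ^ 2))) x).symm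
  push_cast
  rw [hcast, hcast, hcast, Int.cast_add, Int.cast_mul, Int.cast_natCast,
    eval_add_of_sq_eq_zero _ _ _ hsq, derivative_map]
  ring

lemma card_filter_eval_eq_zero_le (p : ℕ) [Fact p.Prime] (h : ℤ[X])
    (hh : h.map (Int.castRingHom (ZMod p)) ≠ 0) :
    #((range p).filter fun u : ℕ => ((h.eval (u : ℤ) : ℤ) : ZMod p) = 0)
      ≤ (h.map (Int.castRingHom (ZMod p))).natDegree := by
  rw [← card_image_of_injOn (f := fun u : ℕ => (u : ZMod p))]
  · refine card_le_degree_of_subset_roots fun x hx => ?_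
    rw [mem_val] at hx
    obtain ⟨u, hu, rfl⟩ := mem_image.1 hx
    rw [mem_roots hh, IsRoot, eval_natCast_map]
    simpa using (mem_filter.1 hu).2
  · intro u hu v hv huv
    simp only [coe_filter, mem_range, Set.mem_ofPred_eq] at hu hv
    simpa [ZMod.val_cast_of_lt hu.1, ZMod.val_cast_of_lt hv.1] using congrArg ZMod.val huv

lemma sum_range_stdAddChar_eval_add_mul (p : ℕ) [NeZero p] (g : ℤ[X]) (u : ℕ) :
    ∑ v ∈ range p, ZMod.stdAddChar ((g.eval ((u + p * v : ℕ) : ℤ) : ℤ) : ZMod (p ^ 2))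
      = ZMod.stdAddChar ((g.eval (u : ℤ) : ℤ) : ZMod (p ^ 2))
        * if (((derivative g).eval (u : ℤ) : ℤ) : ZMod p) = 0 then (p : ℂ) else 0 := by
  have hterm (v : ℕ) : ZMod.stdAddChar ((g.eval ((u + p * v : ℕ) : ℤ) : ℤ) : ZMod (p ^ 2))
      = ZMod.stdAddChar ((g.eval (u : ℤ) : ℤ) : ZMod (p ^ 2))
        * ZMod.stdAddChar (((derivative g).eval (u : ℤ) : ℤ) : ZMod p) ^ v := by
    push_cast
    rw [intCast_eval_add_natCast_mul, AddChar.map_add_eq_mul, ZMod.stdAddChar_natCast_mul_intCast,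
      Int.cast_mul, Int.cast_natCast, ← nsmul_eq_mul, AddChar.map_nsmul_eq_pow]
  have hζ : ZMod.stdAddChar (((derivative g).eval (u : ℤ) : ℤ) : ZMod p) ^ p = 1 := by
    rw [← AddChar.map_nsmul_eq_pow, nsmul_eq_mul, ZMod.natCast_self, zero_mul,
      AddChar.map_zero_eq_one]
  rw [sum_congr rfl fun v _ => hterm v, ← mul_sum, geom_sum_eq_ite_of_pow_eq_one hζ]
  simp only [ZMod.stdAddChar_intCast_eq_one_iff]

theorem norm_sum_stdAddChar_eval_le (p : ℕ) [Fact p.Prime] (g : ℤ[X])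
    (hg : (derivative g).map (Int.castRingHom (ZMod p)) ≠ 0) :
    ‖∑ n ∈ range (p ^ 2), ZMod.stdAddChar ((g.eval (n : ℤ) : ℤ) : ZMod (p ^ 2))‖
      ≤ ((g.natDegree - 1 : ℕ) : ℝ) * p := by
  have hroots := (card_filter_eval_eq_zero_le p _ hg).trans
    ((natDegree_map_le (f := Int.castRingHom (ZMod p))).trans (natDegree_derivative_le g))
  calc ‖∑ n ∈ range (p ^ 2), ZMod.stdAddChar ((g.eval (n : ℤ) : ℤ) : ZMod (p ^ 2))‖
      = ‖∑ u ∈ range p, ZMod.stdAddChar ((g.eval (u : ℤ) : ℤ) : ZMod (p ^ 2))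
          * if (((derivative g).eval (u : ℤ) : ℤ) : ZMod p) = 0 then (p : ℂ) else 0‖ := by
        have hsplit := sum_range_mul_eq_sum_sum p p
          fun n => ZMod.stdAddChar ((g.eval (n : ℤ) : ℤ) : ZMod (p ^ 2))
        rw [← sq] at hsplit
        simp only [hsplit, sum_range_stdAddChar_eval_add_mul]
    _ ≤ ∑ u ∈ range p, if (((derivative g).eval (u : ℤ) : ℤ) : ZMod p) = 0 then (p : ℝ) else 0 := by
        refine (norm_sum_le _ _).trans_eq (sum_congr rfl fun u _ => ?_)
        rw [norm_mul, ZMod.norm_stdAddChar, one_mul, apply_ite norm, Complex.norm_natCast,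
          norm_zero]
    _ ≤ ((g.natDegree - 1 : ℕ) : ℝ) * p := by
        rw [← sum_filter, sum_const, nsmul_eq_mul]
        gcongr

section Korobov

variable {d : ℕ}

noncomputable def korobovPoly (k : Fin d → ℤ) : ℤ[X] := ∑ j, C (k j) * X ^ ((j : ℕ) + 1)

noncomputable def korobovPoint (q n : ℕ) : Fin d → ℝ :=
  fun j => Int.fract ((n : ℝ) ^ ((j : ℕ) + 1) / q)

noncomputable def fourierChar (k : Fin d → ℤ) (x : Fin d → ℝ) : ℂ :=
  exp (2 * π * I * ∑ j, (k j : ℂ) * (x j : ℂ))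

lemma eval_korobovPoly (k : Fin d → ℤ) (n : ℤ) :
    (korobovPoly k).eval n = ∑ j, k j * n ^ ((j : ℕ) + 1) := by
  simp [korobovPoly, eval_finsetSum]

lemma natDegree_korobovPoly_le (k : Fin d → ℤ) : (korobovPoly k).natDegree ≤ d :=
  natDegree_sum_le_of_forall_le _ _ fun j _ => (natDegree_C_mul_X_pow_le _ _).trans j.isLt

lemma coeff_korobovPoly (k : Fin d → ℤ) (j : Fin d) :
    (korobovPoly k).coeff ((j : ℕ) + 1) = k j := by
  simp [korobovPoly, Fin.val_inj]

lemma map_derivative_korobovPoly_ne_zero {p : ℕ} [Fact p.Prime] (hdp : d < p) {k : Fin d → ℤ}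
    {j : Fin d} (hj : ¬ (p : ℤ) ∣ k j) :
    (derivative (korobovPoly k)).map (Int.castRingHom (ZMod p)) ≠ 0 := by
  intro h
  have hcoeff := congrArg (coeff · (j : ℕ)) h
  simp only [coeff_map, coeff_derivative, coeff_korobovPoly, coeff_zero, eq_intCast,
    Int.cast_mul, Int.cast_add, Int.cast_natCast, Int.cast_one, mul_eq_zero] at hcoeff
  rcases hcoeff with hk | hj1
  · exact hj ((ZMod.intCast_zmod_eq_zero_iff_dvd _ _).1 hk)
  · rw [← Nat.cast_succ, ZMod.natCast_eq_zero_iff] at hj1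
    exact absurd (Nat.le_of_dvd j.val.succ_pos hj1) (by omega)

lemma norm_fourierChar (k : Fin d → ℤ) (x : Fin d → ℝ) : ‖fourierChar k x‖ = 1 := by
  rw [fourierChar, show 2 * π * I * ∑ j, (k j : ℂ) * (x j : ℂ)
    = ((2 * π * ∑ j, k j * x j : ℝ) : ℂ) * I by push_cast; ring]
  exact norm_exp_ofReal_mul_I _

/-- The Korobov phase `∑ k_j {n^{j+1}/q}` differs from `g_k(n)/q` by an integer. -/
lemma fourierChar_korobovPoint (q : ℕ) [NeZero q] (k : Fin d → ℤ) (n : ℕ) :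
    fourierChar k (korobovPoint q n)
      = ZMod.stdAddChar (((korobovPoly k).eval (n : ℤ) : ℤ) : ZMod q) := by
  set m : ℤ := ∑ j, k j * ⌊(n : ℝ) ^ ((j : ℕ) + 1) / q⌋
  have hq : (q : ℂ) ≠ 0 := NeZero.ne _
  have hphase : 2 * π * I * ∑ j, (k j : ℂ) * ((korobovPoint q n j : ℝ) : ℂ)
      = 2 * π * I * ((korobovPoly k).eval (n : ℤ) : ℤ) / q - m * (2 * π * I) := by
    simp only [korobovPoint, Int.fract, eval_korobovPoly, m]
    push_cast
    rw [mul_div_assoc, sum_div, mul_sum, mul_sum, sum_mul, ← sum_sub_distrib]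
    refine sum_congr rfl fun j _ => ?_
    field_simp
  rw [fourierChar, hphase, exp_sub, exp_int_mul_two_pi_mul_I, div_one, ZMod.stdAddChar_coe]

lemma norm_sum_fourierChar_le_card {ι : Type*} (s : Finset ι) (k : Fin d → ℤ)
    (x : ι → Fin d → ℝ) : ‖∑ i ∈ s, fourierChar k (x i)‖ ≤ #s := by
  refine (norm_sum_le _ _).trans_eq ?_
  simp [norm_fourierChar]

lemma norm_sum_fourierChar_korobovPoint_le {p : ℕ} (hp : p.Prime) (hdp : d < p)
    (k : Fin d → ℤ) :
    ‖∑ n ∈ range (p ^ 2), fourierChar k (korobovPoint (p ^ 2) n)‖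
      ≤ (if ∀ j, (p : ℤ) ∣ k j then (p : ℝ) ^ 2 else 0) + ((d - 1 : ℕ) : ℝ) * p := by
  have := Fact.mk hp
  split_ifs with hk
  · refine (norm_sum_fourierChar_le_card _ _ _).trans ?_
    simp only [card_range, Nat.cast_pow]
    exact le_add_of_nonneg_right (by positivity)
  · push Not at hk
    obtain ⟨j, hj⟩ := hk
    simp only [fourierChar_korobovPoint, zero_add]
    refine (norm_sum_stdAddChar_eval_le p _
      (map_derivative_korobovPoly_ne_zero hdp hj)).trans ?_
    gcongr
    exact natDegree_korobovPoly_le k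

end Korobov

theorem norm_sub_average_le_of_fourier_expansion {κ ι : Type*} {coef : κ → ℂ}
    {w : κ → ℝ} {χ : κ → ι → ℂ} {k₀ : κ} {s : Finset ι} {F : ι → ℂ} {δ : ℝ}
    (hw : ∀ k, 1 ≤ w k) (hsum : Summable fun k => ‖coef k‖ * w k)
    (hχ : ∀ k i, ‖χ k i‖ = 1) (hχ₀ : ∀ i, χ k₀ i = 1) (hs : s.Nonempty)
    (hF : ∀ i ∈ s, F i = ∑' k, coef k * χ k i) (hδ : 0 ≤ δ)
    (hbound : ∀ k ≠ k₀, ‖∑ i ∈ s, χ k i‖ ≤ δ * w k * #s) :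
    ‖coef k₀ - (1 / #s) * ∑ i ∈ s, F i‖ ≤ δ * ∑' k, ‖coef k‖ * w k := by
  classical
  have hcard : (0 : ℝ) < #s := by exact_mod_cast hs.card_pos
  have hcoef : Summable fun k => ‖coef k‖ :=
    hsum.of_nonneg_of_le (fun _ => norm_nonneg _)
      fun k => le_mul_of_one_le_right (norm_nonneg _) (hw k)
  have hterm (i : ι) : Summable fun k => coef k * χ k i :=
    hcoef.of_norm_bounded fun k => by rw [norm_mul, hχ, mul_one]
  set m : κ → ℂ := fun k => (1 / #s) * ∑ i ∈ s, χ k i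
  have hm (k : κ) : ‖m k‖ ≤ 1 := by
    simp only [m, norm_mul, one_div, norm_inv, Complex.norm_natCast]
    rw [inv_mul_le_one₀ hcard]
    exact (norm_sum_le _ _).trans_eq (by simp [hχ])
  have hm₀ : m k₀ = 1 := by
    simp only [m, hχ₀, sum_const, nsmul_eq_mul, mul_one]
    exact one_div_mul_cancel (by exact_mod_cast hcard.ne')
  have hmk (k : κ) (hk : k ≠ k₀) : ‖m k‖ ≤ δ * w k := by
    simp only [m, norm_mul, one_div, norm_inv, Complex.norm_natCast]
    rw [inv_mul_le_iff₀ hcard]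
    linarith [hbound k hk]
  have hsm : Summable fun k => coef k * m k :=
    hcoef.of_norm_bounded fun k => by
      rw [norm_mul]; exact mul_le_of_le_one_right (norm_nonneg _) (hm k)
  have havg : (1 / #s) * ∑ i ∈ s, F i = ∑' k, coef k * m k := by
    rw [sum_congr rfl hF, ← Summable.tsum_finsetSum fun i _ => hterm i, ← tsum_mul_left]
    exact tsum_congr fun k => by simp only [m, mul_sum]; exact sum_congr rfl fun i _ => by ring
  rw [havg, hsm.tsum_eq_add_tsum_ite k₀, hm₀, mul_one, sub_add_cancel_left, norm_neg,
    ← tsum_mul_left]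
  refine tsum_of_norm_bounded (hsum.mul_left δ).hasSum fun k => ?_
  split_ifs with hk
  · rw [norm_zero]; exact mul_nonneg hδ (mul_nonneg (norm_nonneg _) (by linarith [hw k]))
  · rw [norm_mul, mul_left_comm]
    exact mul_le_mul_of_nonneg_left (hmk k hk) (norm_nonneg _)

lemma mem_primesInDyadic {M p : ℕ} :
    p ∈ primesInDyadic M ↔ p.Prime ∧ (M + 1) / 2 < p ∧ p ≤ M := by
  simp only [primesInDyadic, mem_filter, mem_range, Nat.lt_succ_iff]
  tauto

lemma sum_sq_primesInDyadic_le (M : ℕ) : ∑ p ∈ primesInDyadic M, p ^ 2 ≤ M ^ 3 := by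
  have hcard : #(primesInDyadic M) ≤ M :=
    calc #(primesInDyadic M) ≤ #(Ioc 0 M) := card_le_card fun p hp => by
          obtain ⟨hp, -, hpM⟩ := mem_primesInDyadic.1 hp
          exact mem_Ioc.2 ⟨hp.pos, hpM⟩
      _ = M := by simp
  calc ∑ p ∈ primesInDyadic M, p ^ 2 ≤ ∑ _p ∈ primesInDyadic M, M ^ 2 :=
        sum_le_sum fun p hp => Nat.pow_le_pow_left (mem_primesInDyadic.1 hp).2.2 2
    _ ≤ M ^ 3 := by
        rw [sum_const, smul_eq_mul, pow_succ' M 2]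
        exact Nat.mul_le_mul_right _ hcard

lemma card_mul_sq_le_four_mul_sum_sq (M : ℕ) :
    #(primesInDyadic M) * M ^ 2 ≤ 4 * ∑ p ∈ primesInDyadic M, p ^ 2 := by
  rw [mul_sum, ← smul_eq_mul, ← sum_const]
  refine sum_le_sum fun p hp => ?_
  have : M < 2 * p := by have := (mem_primesInDyadic.1 hp).2.1; omega
  nlinarith

section Composite

variable {d : ℕ}

def commonPrimeDivisors (M : ℕ) (k : Fin d → ℤ) : Finset ℕ :=
  (primesInDyadic M).filter fun p => ∀ j, (p : ℤ) ∣ k j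

noncomputable def logWeight (k : Fin d → ℤ) : ℝ :=
  max 1 (Real.log ((univ.sup fun j => (k j).natAbs : ℕ) : ℝ))

lemma pow_card_le_natAbs_of_forall_prime_dvd {S : Finset ℕ} {a : ℤ} (ha : a ≠ 0) {y : ℝ}
    (hy : 0 ≤ y) (hS : ∀ p ∈ S, p.Prime ∧ y ≤ p ∧ (p : ℤ) ∣ a) : y ^ #S ≤ a.natAbs := by
  have hdvd : ∏ p ∈ S, p ∣ a.natAbs := prod_primes_dvd _ (fun p hp => (hS p hp).1.prime)
    fun p hp => Int.natCast_dvd.1 (hS p hp).2.2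
  calc y ^ #S = ∏ _p ∈ S, y := (prod_const y).symm
    _ ≤ ∏ p ∈ S, (p : ℝ) := prod_le_prod (fun _ _ => hy) fun p hp => (hS p hp).2.1
    _ = ((∏ p ∈ S, p : ℕ) : ℝ) := by push_cast; rfl
    _ ≤ a.natAbs := by exact_mod_cast Nat.le_of_dvd (Int.natAbs_pos.2 ha) hdvd

/-- The primes of `𝑃_M` dividing every `k_j` exceed `M / 2 ≥ √M`, and their product divides
some `k_j ≠ 0`, so there are at most `2 log |k|_∞ / log M` of them. -/
lemma card_commonPrimeDivisors_mul_log_le {M : ℕ} (hM : 4 ≤ M) {k : Fin d → ℤ} (hk : k ≠ 0) :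
    #(commonPrimeDivisors M k) * Real.log M ≤ 2 * logWeight k := by
  obtain ⟨j₀, hj₀⟩ := Function.ne_iff.1 hk
  set B := #(commonPrimeDivisors M k)
  have hM' : (4 : ℝ) ≤ M := by exact_mod_cast hM
  have hpow : ((M : ℝ) / 2) ^ B ≤ (univ.sup fun j => (k j).natAbs : ℕ) := by
    refine (pow_card_le_natAbs_of_forall_prime_dvd hj₀ (by positivity) fun p hp => ?_).trans ?_
    · obtain ⟨hp, hpk⟩ := mem_filter.1 hp
      obtain ⟨hprime, hlow, -⟩ := mem_primesInDyadic.1 hp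
      have : M < 2 * p := by omega
      refine ⟨hprime, ?_, hpk j₀⟩
      rw [div_le_iff₀ two_pos]
      exact_mod_cast this.le.trans_eq (mul_comm 2 p)
    · exact_mod_cast le_sup (f := fun j => (k j).natAbs) (mem_univ j₀)
  have hlogM : Real.log M ≤ 2 * Real.log ((M : ℝ) / 2) := by
    have := Real.log_le_log (by positivity) (show (M : ℝ) ≤ ((M : ℝ) / 2) ^ 2 by nlinarith)
    rw [Real.log_pow, Nat.cast_ofNat] at this
    exact this
  calc (B : ℝ) * Real.log M ≤ B * (2 * Real.log ((M : ℝ) / 2)) := by gcongr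
    _ = 2 * Real.log (((M : ℝ) / 2) ^ B) := by rw [Real.log_pow]; ring
    _ ≤ 2 * logWeight k := by
        gcongr
        exact (Real.log_le_log (by positivity) hpow).trans (le_max_right _ _)

lemma norm_sum_fourierChar_composite_le {M : ℕ} (hdM : 2 * d ≤ M) (k : Fin d → ℤ) :
    ‖∑ p ∈ primesInDyadic M, ∑ n ∈ range (p ^ 2), fourierChar k (korobovPoint (p ^ 2) n)‖
      ≤ #(commonPrimeDivisors M k) * (M : ℝ) ^ 2
        + #(primesInDyadic M) * (((d - 1 : ℕ) : ℝ) * M) := by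
  calc _ ≤ ∑ p ∈ primesInDyadic M,
        ((if ∀ j, (p : ℤ) ∣ k j then (M : ℝ) ^ 2 else 0) + ((d - 1 : ℕ) : ℝ) * M) := by
        refine (norm_sum_le _ _).trans (sum_le_sum fun p hp => ?_)
        obtain ⟨hprime, hlow, hpM⟩ := mem_primesInDyadic.1 hp
        have hpM' : (p : ℝ) ≤ M := by exact_mod_cast hpM
        refine (norm_sum_fourierChar_korobovPoint_le hprime (by omega) k).trans ?_
        gcongr
        split_ifs <;> gcongr
    _ = _ := by
        rw [sum_add_distrib, ← sum_filter, sum_const, sum_const, nsmul_eq_mul, nsmul_eq_mul]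
        rfl

theorem norm_sum_fourierChar_composite_le_of_ne_zero {c : ℝ} (hc0 : 0 < c) (hc2 : c ≤ 2)
    {M : ℕ} (hM : 4 ≤ M) (hdM : 2 * d ≤ M)
    (hcard : c * M / Real.log M ≤ #(primesInDyadic M)) {k : Fin d → ℤ} (hk : k ≠ 0) :
    ‖∑ p ∈ primesInDyadic M, ∑ n ∈ range (p ^ 2), fourierChar k (korobovPoint (p ^ 2) n)‖
      ≤ 8 * d / (c * M) * logWeight k * ((∑ p ∈ primesInDyadic M, p ^ 2 : ℕ) : ℝ) := by
  obtain ⟨j₀, -⟩ := Function.ne_iff.1 hk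
  have hd : (1 : ℝ) ≤ d := by exact_mod_cast j₀.pos
  have hN : (#(primesInDyadic M) : ℝ) * (M : ℝ) ^ 2
      ≤ 4 * ((∑ p ∈ primesInDyadic M, p ^ 2 : ℕ) : ℝ) := by
    exact_mod_cast card_mul_sq_le_four_mul_sum_sq M
  set A : ℝ := (#(primesInDyadic M) : ℝ)
  set B : ℝ := (#(commonPrimeDivisors M k) : ℝ)
  set N : ℝ := ((∑ p ∈ primesInDyadic M, p ^ 2 : ℕ) : ℝ)
  set w := logWeight k
  have hM' : (4 : ℝ) ≤ M := by exact_mod_cast hM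
  have hL : 0 < Real.log M := Real.log_pos (by linarith)
  have hw : 1 ≤ w := le_max_left _ _
  have hA : c * M ≤ A * Real.log M := (div_le_iff₀ hL).1 hcard
  have hB : B * Real.log M ≤ 2 * w := card_commonPrimeDivisors_mul_log_le hM hk
  have hBM : c * (B * M ^ 2) ≤ 2 * w * A * M := by
    refine le_of_mul_le_mul_right ?_ hL
    calc c * (B * M ^ 2) * Real.log M = (B * Real.log M) * (c * M) * M := by ring
      _ ≤ (2 * w) * (A * Real.log M) * M := by gcongr
      _ = 2 * w * A * M * Real.log M := by ring
  have hAM : c * (A * ((d - 1) * M)) ≤ 2 * (d - 1) * w * A * M := by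
    calc c * (A * ((d - 1) * M)) ≤ (2 * w) * (A * ((d - 1) * M)) := by
          gcongr
          linarith
      _ = 2 * (d - 1) * w * A * M := by ring
  rw [div_mul_eq_mul_div, div_mul_eq_mul_div, le_div_iff₀ (by positivity)]
  refine (mul_le_mul_of_nonneg_right (norm_sum_fourierChar_composite_le hdM k)
    (by positivity)).trans ?_
  rw [Nat.cast_sub (by exact_mod_cast hd), Nat.cast_one]
  calc (B * M ^ 2 + A * ((d - 1) * M)) * (c * M)
      = M * (c * (B * M ^ 2) + c * (A * ((d - 1) * M))) := by ring
    _ ≤ M * (2 * w * A * M + 2 * (d - 1) * w * A * M) := by gcongr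
    _ = 2 * d * w * (A * M ^ 2) := by ring
    _ ≤ 2 * d * w * (4 * N) := by gcongr
    _ = 8 * d * w * N := by ring

theorem norm_coef_zero_sub_korobov_average_le {c : ℝ} (hc0 : 0 < c) (hc2 : c ≤ 2) {M : ℕ}
    (hM : 4 ≤ M) (hdM : 2 * d ≤ M) (hcard : c * M / Real.log M ≤ #(primesInDyadic M))
    (f : (Fin d → ℝ) → ℂ) (coef : (Fin d → ℤ) → ℂ)
    (hsum : Summable fun k => ‖coef k‖ * logWeight k)
    (hf : ∀ x, f x = ∑' k, coef k * fourierChar k x) :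
    ‖coef 0 - (1 / ((∑ p ∈ primesInDyadic M, p ^ 2 : ℕ) : ℂ)) *
        ∑ p ∈ primesInDyadic M, ∑ n ∈ range (p ^ 2), f (korobovPoint (p ^ 2) n)‖
      ≤ 8 * d / (c * M) * ∑' k, ‖coef k‖ * logWeight k := by
  set s := (primesInDyadic M).sigma fun p => range (p ^ 2)
  have hs : #s = ∑ p ∈ primesInDyadic M, p ^ 2 := by simp [s, card_sigma]
  have hM' : (1 : ℝ) < M := by exact_mod_cast (by omega : 1 < M)
  obtain ⟨p, hp⟩ : (primesInDyadic M).Nonempty := by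
    have : 0 < c * M / Real.log M := div_pos (by positivity) (Real.log_pos hM')
    exact card_pos.1 (by exact_mod_cast this.trans_le hcard)
  have hF : ∑ i ∈ s, f (korobovPoint (i.1 ^ 2) i.2)
      = ∑ p ∈ primesInDyadic M, ∑ n ∈ range (p ^ 2), f (korobovPoint (p ^ 2) n) :=
    sum_sigma _ _ _
  rw [← hs, ← hF]
  have hs₀ : s.Nonempty :=
    ⟨⟨p, 0⟩, mem_sigma.2 ⟨hp, mem_range.2 (pow_pos (mem_primesInDyadic.1 hp).1.pos 2)⟩⟩
  have hbound (k : Fin d → ℤ) (hk : k ≠ 0) :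
      ‖∑ i ∈ s, fourierChar k (korobovPoint (i.1 ^ 2) i.2)‖
        ≤ 8 * d / (c * M) * logWeight k * #s := by
    rw [sum_sigma, hs]
    exact norm_sum_fourierChar_composite_le_of_ne_zero hc0 hc2 hM hdM hcard hk
  exact norm_sub_average_le_of_fourier_expansion (coef := coef) (w := logWeight) (k₀ := 0)
    (χ := fun k i => fourierChar k (korobovPoint (i.1 ^ 2) i.2)) (s := s)
    (F := fun i => f (korobovPoint (i.1 ^ 2) i.2)) (δ := 8 * d / (c * M))
    (fun k => le_max_left _ _) hsum (fun k i => norm_fourierChar _ _)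
    (fun i => by simp [fourierChar]) hs₀ (fun i _ => hf _) (by positivity) hbound

end Composite

/-- Let `c ∈ (0,1)` with `|𝑃_M| ≥ c·M/log M` for all `M ≥ 2`. Then for
every `d ≥ 1` and `ε ∈ (0,1)` there is `M ≥ 2` such that the equal-weight QMC rule based
on `T_{M,d}^comp` uses `N = ∑_{p∈𝑃_M} p² ≤ (8d/(cε) + 1)³` function evaluations and
integrates every `f` with absolutely convergent Fourier series of weighted coefficient
norm `≤ 1` with error at most `ε`; hence the integration problem in `F_d` is polynomially
tractable with both exponents at most 3. -/
theorem polynomial_tractability_Fd (c : ℝ) (hc0 : 0 < c) (hc1 : c < 1)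
    (hcard : ∀ M : ℕ, 2 ≤ M → c * M / Real.log M ≤ ((primesInDyadic M).card : ℝ))
    (d : ℕ) (hd : 1 ≤ d) (ε : ℝ) (hε0 : 0 < ε) (hε1 : ε < 1) :
    ∃ M : ℕ, 2 ≤ M ∧
      ((∑ p ∈ primesInDyadic M, p ^ 2 : ℕ) : ℝ) ≤ (8 * d / (c * ε) + 1) ^ 3 ∧
      ∀ (f : (Fin d → ℝ) → ℂ) (coef : (Fin d → ℤ) → ℂ),
        (Summable fun k : Fin d → ℤ =>
          ‖coef k‖ *
            max 1 (Real.log ((Finset.univ.sup fun j : Fin d => (k j).natAbs : ℕ) : ℝ))) →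
        (∀ x : Fin d → ℝ, f x = ∑' k : Fin d → ℤ,
          coef k * Complex.exp (2 * Real.pi * Complex.I *
            ∑ j : Fin d, (k j : ℂ) * (x j : ℂ))) →
        (∑' k : Fin d → ℤ, ‖coef k‖ *
          max 1 (Real.log ((Finset.univ.sup fun j : Fin d => (k j).natAbs : ℕ) : ℝ))) ≤ 1 →
        ‖(coef 0 - (1 / ((∑ p ∈ primesInDyadic M, p ^ 2 : ℕ) : ℂ)) *
          ∑ p ∈ primesInDyadic M, ∑ n ∈ Finset.range (p ^ 2),
            f (fun j : Fin d => Int.fract ((n : ℝ) ^ ((j : ℕ) + 1) / (p ^ 2 : ℕ))))‖ ≤ ε := by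
  have hd' : (1 : ℝ) ≤ d := by exact_mod_cast hd
  have hcε : 0 < c * ε := mul_pos hc0 hε0
  set x := 8 * d / (c * ε)
  have hx : 8 * (d : ℝ) ≤ x := by
    rw [le_div_iff₀ hcε]
    nlinarith [mul_lt_mul'' hc1 hε1 hc0.le hε0.le]
  obtain ⟨M, hxM, hMx⟩ : ∃ M : ℕ, x ≤ M ∧ (M : ℝ) ≤ x + 1 :=
    ⟨⌈x⌉₊, Nat.le_ceil x, (Nat.ceil_lt_add_one (by linarith)).le⟩
  have hM : 4 ≤ M ∧ 2 * d ≤ M := by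
    constructor <;> (rw [← Nat.cast_le (α := ℝ)]; push_cast; linarith)
  refine ⟨M, by omega, ?_, fun f coef hsum hf hnorm => ?_⟩
  · calc ((∑ p ∈ primesInDyadic M, p ^ 2 : ℕ) : ℝ) ≤ (M : ℝ) ^ 3 := by
          exact_mod_cast sum_sq_primesInDyadic_le M
      _ ≤ (x + 1) ^ 3 := by gcongr
  · have hδ : 8 * d / (c * M) ≤ ε := by
      rw [div_le_iff₀ (mul_pos hc0 (by linarith))]
      calc (8 * d : ℝ) = x * (c * ε) := (div_mul_cancel₀ _ hcε.ne').symm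
        _ ≤ M * (c * ε) := by gcongr
        _ = ε * (c * M) := by ring
    refine (norm_coef_zero_sub_korobov_average_le hc0 (by linarith) hM.1 hM.2
      (hcard M (by omega)) f coef hsum hf).trans ?_
    calc 8 * d / (c * M) * _ ≤ 8 * d / (c * M) * 1 := by gcongr; exact hnorm
      _ ≤ ε := by linarith
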